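/- arXiv:1504.00912 — 2 statements merged into one kernel-verified Lean document; each statement's English description precedes it below -/
import Mathlib

section
/- Let n ≥ 2 and α > 0. There exists C > 0 depending only on n and α such that: if w is continuous on cl B₁⁺, twice differentiable in B₁ ∩ {x_n > 0} with x_n^α Δ_{x′}w + w_{nn} = 0 there, w = 0 on B₁ ∩ {x_n = 0}, and ‖w‖_{L^∞(B₁⁺)} ≤ 1, then |w(x)| ≤ C·x_n for all x ∈ B_{1/2}⁺. -/
open Metric Set

noncomputable section

/-- The last coordinate index of `Fin n` (for `n ≥ 2`). -/
def lastIdx (n : ℕ) (hn : 2 ≤ n) : Fin n := ⟨n - 1, by omega⟩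

/-- The last ("vertical") coordinate `x_n` of a point `x ∈ ℝⁿ`. -/
def xLast (n : ℕ) (hn : 2 ≤ n) (x : EuclideanSpace ℝ (Fin n)) : ℝ := x (lastIdx n hn)

/-- `|x′|²`, the squared norm of the tangential part of `x`. -/
def sqT (n : ℕ) (x : EuclideanSpace ℝ (Fin n)) : ℝ :=
  ∑ i : Fin n, if (i : ℕ) < n - 1 then (x i) ^ 2 else 0

/-- The projection onto the first `n-1` (tangential) coordinates. -/
def projT (n : ℕ) (x : EuclideanSpace ℝ (Fin n)) : EuclideanSpace ℝ (Fin (n - 1)) :=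
  (EuclideanSpace.equiv (Fin (n - 1)) ℝ).symm fun i => x (Fin.castLE (Nat.sub_le n 1) i)

/-- The model solution `U₀(x) = ½|x′|² + x_n^{2+α}/((1+α)(2+α))`. -/
def U0 (n : ℕ) (hn : 2 ≤ n) (α : ℝ) (x : EuclideanSpace ℝ (Fin n)) : ℝ :=
  sqT n x / 2 + (xLast n hn x) ^ (2 + α) / ((1 + α) * (2 + α))

/-- The section `S_h(U₀) = {x : x_n ≥ 0, U₀(x) < h}`. -/
def SU0 (n : ℕ) (hn : 2 ≤ n) (α h : ℝ) : Set (EuclideanSpace ℝ (Fin n)) :=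
  {x | 0 ≤ xLast n hn x ∧ U0 n hn α x < h}

/-- The Hessian matrix of second partial derivatives of `u` at `x`. -/
def Hess (n : ℕ) (u : EuclideanSpace ℝ (Fin n) → ℝ) (x : EuclideanSpace ℝ (Fin n)) :
    Matrix (Fin n) (Fin n) ℝ :=
  Matrix.of fun i j =>
    fderiv ℝ (fun y => fderiv ℝ u y (EuclideanSpace.single j 1)) x (EuclideanSpace.single i 1)

/-- `u` is twice differentiable at `x`. -/
def TwiceDiffAt (n : ℕ) (u : EuclideanSpace ℝ (Fin n) → ℝ) (x : EuclideanSpace ℝ (Fin n)) : Prop :=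
  DifferentiableAt ℝ u x ∧
    ∀ j, DifferentiableAt ℝ (fun y => fderiv ℝ u y (EuclideanSpace.single j 1)) x

/-- A sliding along `x_n = 0`: `A x = x + x_n • τ` with `τ · e_n = 0`. -/
def IsSliding (n : ℕ) (hn : 2 ≤ n)
    (A : EuclideanSpace ℝ (Fin n) →L[ℝ] EuclideanSpace ℝ (Fin n)) : Prop :=
  ∃ τ : EuclideanSpace ℝ (Fin n), τ (lastIdx n hn) = 0 ∧
    ∀ x, A x = x + (xLast n hn x) • τ

/-- The distance to the boundary `d_{∂Ω}`. -/
def distBd (n : ℕ) (Ω : Set (EuclideanSpace ℝ (Fin n))) (x : EuclideanSpace ℝ (Fin n)) : ℝ :=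
  Metric.infDist x (frontier Ω)

/-- The diagonal matrix `F_h = diag(h^{1/2}, …, h^{1/2}, h^{1/(2+α)})` as a linear map. -/
def Fh (n : ℕ) (hn : 2 ≤ n) (α h : ℝ) :
    EuclideanSpace ℝ (Fin n) →L[ℝ] EuclideanSpace ℝ (Fin n) :=
  LinearMap.toContinuousLinearMap
    (Matrix.toEuclideanLin
      (Matrix.diagonal fun i : Fin n =>
        if (i : ℕ) < n - 1 then h ^ (1 / 2 : ℝ) else h ^ (1 / (2 + α))))

/-!
Comparison with an explicit barrier on the half ball `B₃/₄⁺`. For `x₀ ∈ B₁/₂⁺` put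
`b(x) = 100 |x′ - x₀′|² + (100 n + 3) x_n - 100 n x_n^{2+α}`. Then `b ≥ 0` on the flat part,
`b ≥ 1` on the spherical part, and `x_n^α Δ_{x′} b + b_{nn} < 0` where `x_n > 0`, so by the
second-order conditions along coordinate lines `w - b` has no interior maximum when
`x_n^α Δ_{x′} w + w_{nn} ≥ 0`. Hence `w ≤ b`, and `w(x₀) ≤ b(x₀) ≤ (100 n + 3) x₀ₙ`; the lower
bound follows by applying this to `-w`.
-/

open Filter Topology

theorem IsLocalMax.deriv_deriv_nonpos {f : ℝ → ℝ} {a : ℝ} (h : IsLocalMax f a)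
    (hc : ContinuousAt f a) : deriv (deriv f) a ≤ 0 := by
  by_contra! hpos
  -- a strict second-order minimum that is also a maximum forces `f` to be locally constant
  have hmin : IsLocalMin f a := isLocalMin_of_deriv_deriv_pos hpos h.deriv_eq_zero hc
  have hconst : f =ᶠ[𝓝 a] fun _ => f a := by
    filter_upwards [h, hmin] with x hx hx' using le_antisymm hx hx'
  have hderiv : deriv f =ᶠ[𝓝 a] fun _ => 0 := by
    filter_upwards [hconst.eventuallyEq_nhds] with x hx
    rw [hx.deriv_eq, deriv_const]
  rw [hderiv.deriv_eq, deriv_const] at hpos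
  exact lt_irrefl _ hpos

theorem IsLocalMax.nonpos_of_hasDerivAt_of_hasDerivAt {f f' : ℝ → ℝ} {a d : ℝ}
    (h : IsLocalMax f a) (hf : ∀ᶠ x in 𝓝 a, HasDerivAt f (f' x) x) (hf' : HasDerivAt f' d a) :
    d ≤ 0 := by
  have hderiv : deriv f =ᶠ[𝓝 a] f' := hf.mono fun x hx => hx.deriv
  have := h.deriv_deriv_nonpos hf.self_of_nhds.continuousAt
  rwa [(hf'.congr_of_eventuallyEq hderiv).deriv] at this

section Line

variable {E : Type*} [NormedAddCommGroup E] [NormedSpace ℝ E]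

theorem hasDerivAt_line (z e : E) (s : ℝ) : HasDerivAt (fun s : ℝ => z + s • e) e s := by
  simpa using ((hasDerivAt_id s).smul_const e).const_add z

theorem IsLocalMax.comp_line {f : E → ℝ} {z : E} (h : IsLocalMax f z) (e : E) :
    IsLocalMax (fun s : ℝ => f (z + s • e)) 0 :=
  IsLocalMax.comp_continuous (f := f) (g := fun s : ℝ => z + s • e) (by simpa using h)
    (hasDerivAt_line z e 0).continuousAt

theorem IsLocalMax.fderiv_fderiv_apply_le {f g : E → ℝ} {g' : ℝ → ℝ} {z e : E} {d : ℝ}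
    (hmax : IsLocalMax (fun y => f y - g y) z)
    (hf : ∀ᶠ y in 𝓝 z, DifferentiableAt ℝ f y)
    (hf' : DifferentiableAt ℝ (fun y => fderiv ℝ f y e) z)
    (hg : ∀ᶠ s in 𝓝 0, HasDerivAt (fun s : ℝ => g (z + s • e)) (g' s) s)
    (hg' : HasDerivAt g' d 0) :
    fderiv ℝ (fun y => fderiv ℝ f y e) z e ≤ d := by
  have hlim : Tendsto (fun s : ℝ => z + s • e) (𝓝 0) (𝓝 z) := by
    simpa using (hasDerivAt_line z e 0).continuousAt.tendsto
  have hF : ∀ᶠ s in 𝓝 0, HasDerivAt (fun s : ℝ => f (z + s • e) - g (z + s • e))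
      (fderiv ℝ f (z + s • e) e - g' s) s := by
    filter_upwards [hlim.eventually hf, hg] with s hfs hgs
    exact (hfs.hasFDerivAt.comp_hasDerivAt s (hasDerivAt_line z e s)).sub hgs
  have hF' : HasDerivAt (fun s : ℝ => fderiv ℝ f (z + s • e) e - g' s)
      (fderiv ℝ (fun y => fderiv ℝ f y e) z e - d) 0 :=
    (hf'.hasFDerivAt.comp_hasDerivAt_of_eq 0 (hasDerivAt_line z e 0) (by simp)).sub hg'
  linarith [(hmax.comp_line e).nonpos_of_hasDerivAt_of_hasDerivAt hF hF']

end Line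

section Coordinates

variable {n : ℕ} (hn : 2 ≤ n)

theorem continuous_xLast : Continuous (xLast n hn) :=
  (EuclideanSpace.proj (lastIdx n hn)).continuous

theorem not_lastIdx_lt : ¬ ((lastIdx n hn : ℕ) < n - 1) := by
  simp [lastIdx]

theorem xLast_add_smul_single (y : EuclideanSpace ℝ (Fin n)) (s : ℝ) (j : Fin n) :
    xLast n hn (y + s • EuclideanSpace.single j 1) =
      xLast n hn y + if lastIdx n hn = j then s else 0 := by
  simp [xLast]

theorem sqT_nonneg (x : EuclideanSpace ℝ (Fin n)) : 0 ≤ sqT n x :=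
  Finset.sum_nonneg fun i _ => by split_ifs <;> positivity

theorem continuous_sqT : Continuous (sqT n) :=
  continuous_finsetSum _ fun i _ => by split_ifs <;> fun_prop

theorem sqT_add_smul_single (y : EuclideanSpace ℝ (Fin n)) (s : ℝ) (j : Fin n) :
    sqT n (y + s • EuclideanSpace.single j 1) =
      sqT n y + if (j : ℕ) < n - 1 then 2 * s * y j + s ^ 2 else 0 := by
  rw [← Fintype.sum_ite_eq' j (fun i => if (i : ℕ) < n - 1 then 2 * s * y i + s ^ 2 else 0),
    sqT, sqT, ← Finset.sum_add_distrib]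
  refine Finset.sum_congr rfl fun i _ => ?_
  simp only [PiLp.add_apply, PiLp.smul_apply, PiLp.single_apply, smul_eq_mul]
  split_ifs <;> simp_all
  ring

theorem norm_sq_eq_sqT_add_xLast_sq (x : EuclideanSpace ℝ (Fin n)) :
    ‖x‖ ^ 2 = sqT n x + xLast n hn x ^ 2 := by
  have hlast : ∑ i : Fin n, (if (i : ℕ) < n - 1 then 0 else x i ^ 2) = xLast n hn x ^ 2 := by
    rw [Finset.sum_eq_single (lastIdx n hn), if_neg (not_lastIdx_lt hn), xLast]
    · intro i _ hi
      rw [if_pos]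
      have : (i : ℕ) ≠ n - 1 := fun h => hi (Fin.ext h)
      omega
    · simp
  rw [EuclideanSpace.norm_sq_eq, sqT, ← hlast, ← Finset.sum_add_distrib]
  refine Finset.sum_congr rfl fun i _ => ?_
  split_ifs <;> simp

theorem sqT_le_sqT_sub_add (x y : EuclideanSpace ℝ (Fin n)) :
    sqT n x ≤ 3 * sqT n (x - y) + 3 / 2 * sqT n y := by
  simp only [sqT, Finset.mul_sum, ← Finset.sum_add_distrib]
  refine Finset.sum_le_sum fun i _ => ?_
  split_ifs
  · simp only [PiLp.sub_apply]
    nlinarith [sq_nonneg (x i - 3 / 2 * y i)]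
  · simp

end Coordinates

section Barrier

variable {n : ℕ} (hn : 2 ≤ n) {α : ℝ}

-- On the barrier, `-100 n (2 + α) (1 + α) t ^ α` from the profile beats the tangential part
-- `≤ 200 n t ^ α` of the operator; the extra slope `3` makes the profile `≥ 1` for `t > 3/8`.
def profile (n : ℕ) (α t : ℝ) : ℝ := (100 * n + 3) * t - 100 * n * t ^ (2 + α)

theorem profile_le {t : ℝ} (ht : 0 ≤ t) : profile n α t ≤ (100 * n + 3) * t := by
  have : 0 ≤ 100 * (n : ℝ) * t ^ (2 + α) := by positivity
  unfold profile
  linarith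

theorem three_mul_le_profile (hα : 0 ≤ α) {t : ℝ} (ht0 : 0 ≤ t) (ht1 : t ≤ 1) :
    3 * t ≤ profile n α t := by
  have hpow : t ^ (2 + α) ≤ t := by
    simpa using Real.rpow_le_rpow_of_exponent_ge' ht0 ht1 zero_le_one (by linarith)
  have : 0 ≤ 100 * (n : ℝ) := by positivity
  unfold profile
  nlinarith

theorem continuous_profile (hα : 0 ≤ α) : Continuous (profile n α) := by
  unfold profile
  have := Real.continuous_rpow_const (q := 2 + α) (by linarith)
  fun_prop

theorem hasDerivAt_profile (hα : 0 ≤ α) (t : ℝ) :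
    HasDerivAt (profile n α) (100 * n + 3 - 100 * n * ((2 + α) * t ^ (1 + α))) t := by
  have h := Real.hasDerivAt_rpow_const (x := t) (p := 2 + α) (Or.inr (by linarith))
  rw [show 2 + α - 1 = 1 + α by ring] at h
  exact (((hasDerivAt_id t).const_mul (100 * (n : ℝ) + 3)).sub (h.const_mul _)).congr_deriv
    (by simp)

theorem hasDerivAt_profile_deriv (hα : 0 ≤ α) (t : ℝ) :
    HasDerivAt (fun t => 100 * n + 3 - 100 * n * ((2 + α) * t ^ (1 + α)))
      (-(100 * n * ((2 + α) * ((1 + α) * t ^ α)))) t := by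
  have h := Real.hasDerivAt_rpow_const (x := t) (p := 1 + α) (Or.inr (by linarith))
  rw [show 1 + α - 1 = α by ring] at h
  exact ((h.const_mul (2 + α)).const_mul _).const_sub _

def barrier (n : ℕ) (hn : 2 ≤ n) (α : ℝ) (x₀ x : EuclideanSpace ℝ (Fin n)) : ℝ :=
  100 * sqT n (x - x₀) + profile n α (xLast n hn x)

theorem continuous_barrier (hα : 0 ≤ α) (x₀ : EuclideanSpace ℝ (Fin n)) :
    Continuous (barrier n hn α x₀) :=
  ((continuous_sqT.comp (continuous_sub_right x₀)).const_mul 100).add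
    ((continuous_profile hα).comp (continuous_xLast hn))

theorem barrier_self_le {x₀ : EuclideanSpace ℝ (Fin n)} (hx₀ : 0 ≤ xLast n hn x₀) :
    barrier n hn α x₀ x₀ ≤ (100 * n + 3) * xLast n hn x₀ := by
  simpa [barrier, sqT] using profile_le hx₀

theorem barrier_nonneg_of_xLast_eq_zero (hα : 0 ≤ α) (x₀ : EuclideanSpace ℝ (Fin n))
    {x : EuclideanSpace ℝ (Fin n)} (hx : xLast n hn x = 0) : 0 ≤ barrier n hn α x₀ x := by
  have : profile n α 0 = 0 := by simp [profile, Real.zero_rpow (by linarith : 2 + α ≠ 0)]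
  rw [barrier, hx, this, add_zero]
  exact mul_nonneg (by norm_num) (sqT_nonneg _)

theorem one_le_barrier_of_norm_eq (hα : 0 ≤ α) {x₀ z : EuclideanSpace ℝ (Fin n)}
    (hx₀ : ‖x₀‖ ≤ 1 / 2) (hz : ‖z‖ = 3 / 4) (hz0 : 0 ≤ xLast n hn z) :
    1 ≤ barrier n hn α x₀ z := by
  have hnorm := norm_sq_eq_sqT_add_xLast_sq hn z
  rw [hz] at hnorm
  have hx₀T : sqT n x₀ ≤ 1 / 4 := by
    nlinarith [norm_sq_eq_sqT_add_xLast_sq hn x₀, sq_nonneg (xLast n hn x₀), norm_nonneg x₀]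
  have ht1 : xLast n hn z ≤ 1 := by nlinarith [sqT_nonneg z]
  have hprof := three_mul_le_profile (n := n) hα hz0 ht1
  have hsub := sqT_le_sqT_sub_add z x₀
  have := sqT_nonneg (z - x₀)
  unfold barrier
  -- either `z` is high enough for the profile alone, or far enough sideways from `x₀`
  rcases le_or_gt (xLast n hn z) (3 / 8) with ht | ht <;> nlinarith

variable {w : EuclideanSpace ℝ (Fin n) → ℝ} {x₀ z : EuclideanSpace ℝ (Fin n)}

theorem hess_le_of_isLocalMax_sub_barrier {j : Fin n} (hj : (j : ℕ) < n - 1)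
    (hmax : IsLocalMax (fun x => w x - barrier n hn α x₀ x) z)
    (hw : ∀ᶠ y in 𝓝 z, DifferentiableAt ℝ w y) (hw2 : TwiceDiffAt n w z) :
    Hess n w z j j ≤ 200 := by
  have hne : lastIdx n hn ≠ j := fun h => not_lastIdx_lt hn (h ▸ hj)
  set a := (z - x₀) j
  have hline : (fun s : ℝ => barrier n hn α x₀ (z + s • EuclideanSpace.single j 1)) =
      fun s => barrier n hn α x₀ z + 100 * (a + s) ^ 2 - 100 * a ^ 2 := by
    funext s
    rw [barrier, barrier, add_sub_right_comm, sqT_add_smul_single, xLast_add_smul_single,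
      if_pos hj, if_neg hne, add_zero]
    ring
  refine hmax.fderiv_fderiv_apply_le (g' := fun s => 200 * (a + s)) hw (hw2.2 j)
    (Eventually.of_forall fun s => ?_) ?_
  · rw [hline]
    refine (((((hasDerivAt_id s).const_add a).pow 2).const_mul 100).const_add
      (barrier n hn α x₀ z) |>.sub_const (100 * a ^ 2)).congr_deriv ?_
    simp
    ring
  · simpa using ((hasDerivAt_id (0 : ℝ)).const_add a).const_mul 200

theorem hess_lastIdx_le_of_isLocalMax_sub_barrier (hα : 0 ≤ α)
    (hmax : IsLocalMax (fun x => w x - barrier n hn α x₀ x) z)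
    (hw : ∀ᶠ y in 𝓝 z, DifferentiableAt ℝ w y) (hw2 : TwiceDiffAt n w z) :
    Hess n w z (lastIdx n hn) (lastIdx n hn) ≤
      -(100 * n * ((2 + α) * ((1 + α) * xLast n hn z ^ α))) := by
  have hline :
      (fun s : ℝ => barrier n hn α x₀ (z + s • EuclideanSpace.single (lastIdx n hn) 1)) =
        fun s => 100 * sqT n (z - x₀) + profile n α (xLast n hn z + s) := by
    funext s
    rw [barrier, add_sub_right_comm, sqT_add_smul_single, xLast_add_smul_single,
      if_neg (not_lastIdx_lt hn), if_pos rfl, add_zero]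
  refine hmax.fderiv_fderiv_apply_le hw (hw2.2 _)
    (g' := fun s => 100 * n + 3 - 100 * n * ((2 + α) * (xLast n hn z + s) ^ (1 + α)))
    (Eventually.of_forall fun s => ?_) ?_
  · rw [hline]
    exact (((hasDerivAt_profile hα _).comp_const_add _ s)).const_add _
  · simpa using (hasDerivAt_profile_deriv (n := n) hα (xLast n hn z + 0)).comp_const_add _ 0

end Barrier

section Comparison

variable {n : ℕ} (hn : 2 ≤ n) {α : ℝ}

def grushinOp (n : ℕ) (hn : 2 ≤ n) (α : ℝ) (w : EuclideanSpace ℝ (Fin n) → ℝ)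
    (x : EuclideanSpace ℝ (Fin n)) : ℝ :=
  xLast n hn x ^ α * (∑ i : Fin n, if (i : ℕ) < n - 1 then Hess n w x i i else 0) +
    Hess n w x (lastIdx n hn) (lastIdx n hn)

theorem hess_neg (w : EuclideanSpace ℝ (Fin n) → ℝ) (x : EuclideanSpace ℝ (Fin n))
    (i j : Fin n) :
    Hess n (fun y => -w y) x i j = -Hess n w x i j := by
  simp [Hess, fderiv_fun_neg]

theorem TwiceDiffAt.neg {w : EuclideanSpace ℝ (Fin n) → ℝ} {x : EuclideanSpace ℝ (Fin n)}
    (h : TwiceDiffAt n w x) : TwiceDiffAt n (fun y => -w y) x :=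
  ⟨h.1.neg, fun j => by simpa [fderiv_fun_neg] using (h.2 j).neg⟩

theorem grushinOp_neg (w : EuclideanSpace ℝ (Fin n) → ℝ) (x : EuclideanSpace ℝ (Fin n)) :
    grushinOp n hn α (fun y => -w y) x = -grushinOp n hn α w x := by
  have hsum : (∑ i : Fin n, if (i : ℕ) < n - 1 then -Hess n w x i i else 0) =
      -∑ i : Fin n, if (i : ℕ) < n - 1 then Hess n w x i i else 0 := by
    rw [← Finset.sum_neg_distrib]
    exact Finset.sum_congr rfl fun i _ => by split_ifs <;> simp
  simp only [grushinOp, hess_neg, hsum]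
  ring

variable {w : EuclideanSpace ℝ (Fin n) → ℝ} {x₀ z : EuclideanSpace ℝ (Fin n)}

theorem grushinOp_neg_of_isLocalMax_sub_barrier (hα : 0 < α) (hz : 0 < xLast n hn z)
    (hmax : IsLocalMax (fun x => w x - barrier n hn α x₀ x) z)
    (hw : ∀ᶠ y in 𝓝 z, DifferentiableAt ℝ w y) (hw2 : TwiceDiffAt n w z) :
    grushinOp n hn α w z < 0 := by
  have hsum : (∑ i : Fin n, if (i : ℕ) < n - 1 then Hess n w z i i else 0) ≤ 200 * n :=
    calc _ ≤ ∑ _i : Fin n, (200 : ℝ) := Finset.sum_le_sum fun i _ => by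
            split_ifs with hi
            · exact hess_le_of_isLocalMax_sub_barrier hn hi hmax hw hw2
            · norm_num
      _ = 200 * n := by simp [mul_comm]
  have hlast := hess_lastIdx_le_of_isLocalMax_sub_barrier hn hα.le hmax hw hw2
  have htα : 0 < xLast n hn z ^ α := Real.rpow_pos_of_pos hz α
  have hn0 : (0 : ℝ) < n := by exact_mod_cast (by omega : 0 < n)
  calc grushinOp n hn α w z
      ≤ xLast n hn z ^ α * (200 * n) +
          -(100 * n * ((2 + α) * ((1 + α) * xLast n hn z ^ α))) :=
        add_le_add (mul_le_mul_of_nonneg_left hsum htα.le) hlast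
    _ = -(100 * n * xLast n hn z ^ α * (α * (α + 3))) := by ring
    _ < 0 := neg_neg_of_pos (by positivity)

theorem sub_barrier_nonpos_of_isMaxOn (hα : 0 < α)
    (hdiff : ∀ x ∈ ball 0 1 ∩ {x | 0 < xLast n hn x}, TwiceDiffAt n w x)
    (hsub : ∀ x ∈ ball 0 1 ∩ {x | 0 < xLast n hn x}, 0 ≤ grushinOp n hn α w x)
    (hbot : ∀ x ∈ ball (0 : EuclideanSpace ℝ (Fin n)) 1, xLast n hn x = 0 → w x ≤ 0)
    (hle : ∀ x ∈ ball 0 1 ∩ {x | 0 ≤ xLast n hn x}, w x ≤ 1) (hx₀ : ‖x₀‖ < 1 / 2)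
    (hz : ‖z‖ ≤ 3 / 4) (hz0 : 0 ≤ xLast n hn z)
    (hzmax : IsMaxOn (fun x => w x - barrier n hn α x₀ x)
      (closedBall 0 (3 / 4) ∩ {x | 0 ≤ xLast n hn x}) z) :
    w z - barrier n hn α x₀ z ≤ 0 := by
  rcases hz0.eq_or_lt with hz0 | hz0
  · have hzb : z ∈ ball (0 : EuclideanSpace ℝ (Fin n)) 1 := mem_ball_zero_iff.2 (by linarith)
    linarith [hbot z hzb hz0.symm, barrier_nonneg_of_xLast_eq_zero hn hα.le x₀ hz0.symm]
  rcases hz.eq_or_lt with hz | hz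
  · have hzb : z ∈ ball (0 : EuclideanSpace ℝ (Fin n)) 1 := mem_ball_zero_iff.2 (by linarith)
    linarith [hle z ⟨hzb, hz0.le⟩, one_le_barrier_of_norm_eq hn hα.le hx₀.le hz hz0.le]
  exfalso
  have hU : IsOpen (ball (0 : EuclideanSpace ℝ (Fin n)) 1 ∩ {x | 0 < xLast n hn x}) :=
    isOpen_ball.inter (isOpen_lt continuous_const (continuous_xLast hn))
  have hV : IsOpen (ball (0 : EuclideanSpace ℝ (Fin n)) (3 / 4) ∩ {x | 0 < xLast n hn x}) :=
    isOpen_ball.inter (isOpen_lt continuous_const (continuous_xLast hn))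
  have hzU : z ∈ ball (0 : EuclideanSpace ℝ (Fin n)) 1 ∩ {x | 0 < xLast n hn x} :=
    ⟨mem_ball_zero_iff.2 (by linarith), hz0⟩
  have hlocal : IsLocalMax (fun x => w x - barrier n hn α x₀ x) z :=
    hzmax.isLocalMax <| mem_of_superset (hV.mem_nhds ⟨mem_ball_zero_iff.2 hz, hz0⟩)
      (inter_subset_inter ball_subset_closedBall (ofPred_subset_ofPred.2 fun _ => le_of_lt))
  exact (grushinOp_neg_of_isLocalMax_sub_barrier hn hα hz0 hlocal
    (eventually_of_mem (hU.mem_nhds hzU) fun y hy => (hdiff y hy).1) (hdiff z hzU)).not_ge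
    (hsub z hzU)

theorem le_mul_xLast_of_grushinOp_nonneg (hα : 0 < α)
    (hcont : ContinuousOn w (closedBall 0 1 ∩ {x | 0 ≤ xLast n hn x}))
    (hdiff : ∀ x ∈ ball 0 1 ∩ {x | 0 < xLast n hn x}, TwiceDiffAt n w x)
    (hsub : ∀ x ∈ ball 0 1 ∩ {x | 0 < xLast n hn x}, 0 ≤ grushinOp n hn α w x)
    (hbot : ∀ x ∈ ball (0 : EuclideanSpace ℝ (Fin n)) 1, xLast n hn x = 0 → w x ≤ 0)
    (hle : ∀ x ∈ ball 0 1 ∩ {x | 0 ≤ xLast n hn x}, w x ≤ 1)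
    (hx₀ : x₀ ∈ ball 0 (1 / 2) ∩ {x | 0 ≤ xLast n hn x}) :
    w x₀ ≤ (100 * n + 3) * xLast n hn x₀ := by
  set D := closedBall (0 : EuclideanSpace ℝ (Fin n)) (3 / 4) ∩ {x | 0 ≤ xLast n hn x}
  have hDc : IsCompact D :=
    (isCompact_closedBall _ _).inter_right (isClosed_le continuous_const (continuous_xLast hn))
  have hDsub : D ⊆ closedBall 0 1 ∩ {x | 0 ≤ xLast n hn x} :=
    inter_subset_inter_left _ (closedBall_subset_closedBall (by norm_num))
  have hx₀D : x₀ ∈ D :=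
    ⟨closedBall_subset_closedBall (by norm_num) (ball_subset_closedBall hx₀.1), hx₀.2⟩
  obtain ⟨z, ⟨hz, hz0⟩, hzmax⟩ := hDc.exists_isMaxOn ⟨x₀, hx₀D⟩
    ((hcont.mono hDsub).sub (continuous_barrier hn hα.le x₀).continuousOn)
  have hvz := sub_barrier_nonpos_of_isMaxOn hn hα hdiff hsub hbot hle
    (mem_ball_zero_iff.1 hx₀.1) (mem_closedBall_zero_iff.1 hz) hz0 hzmax
  have hx₀max : w x₀ - barrier n hn α x₀ x₀ ≤ w z - barrier n hn α x₀ z := hzmax hx₀D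
  calc w x₀ ≤ barrier n hn α x₀ x₀ := by linarith
    _ ≤ (100 * n + 3) * xLast n hn x₀ := barrier_self_le hn hx₀.2

end Comparison

/-- barrier bound `|w| ≤ C x_n` for the Grushin-type linearized equation. -/
theorem grushin_linear_growth
    (n : ℕ) (hn : 2 ≤ n) (α : ℝ) (hα : 0 < α) :
    ∃ C : ℝ, 0 < C ∧
      ∀ w : EuclideanSpace ℝ (Fin n) → ℝ,
        ContinuousOn w (closedBall 0 1 ∩ {x | 0 ≤ xLast n hn x}) →
        (∀ x ∈ ball 0 1 ∩ {x | 0 < xLast n hn x}, TwiceDiffAt n w x) →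
        (∀ x ∈ ball 0 1 ∩ {x | 0 < xLast n hn x},
          (xLast n hn x) ^ α *
              (∑ i : Fin n, if (i : ℕ) < n - 1 then Hess n w x i i else 0) +
            Hess n w x (lastIdx n hn) (lastIdx n hn) = 0) →
        (∀ x ∈ ball (0 : EuclideanSpace ℝ (Fin n)) 1, xLast n hn x = 0 → w x = 0) →
        (∀ x ∈ ball 0 1 ∩ {x | 0 ≤ xLast n hn x}, |w x| ≤ 1) →
        ∀ x ∈ ball 0 (1 / 2) ∩ {x | 0 ≤ xLast n hn x},
          |w x| ≤ C * xLast n hn x := by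
  refine ⟨100 * n + 3, by positivity,
    fun w hcont hdiff hpde hzero hbd x hx => abs_le.2 ⟨?_, ?_⟩⟩
  · have hneg := le_mul_xLast_of_grushinOp_nonneg hn hα (w := fun y => -w y) hcont.neg
      (fun y hy => (hdiff y hy).neg)
      (fun y hy => by rw [grushinOp_neg, grushinOp, hpde y hy, neg_zero])
      (fun y hy hy0 => by simp [hzero y hy hy0])
      (fun y hy => le_of_abs_le (by rw [abs_neg]; exact hbd y hy)) hx
    linarith
  · exact le_mul_xLast_of_grushinOp_nonneg hn hα hcont hdiff (fun y hy => (hpde y hy).ge)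
      (fun y hy hy0 => (hzero y hy hy0).le) (fun y hy => le_of_abs_le (hbd y hy)) hx
end
end

section
/- Let n ≥ 2, let V ⊂ ℝ^{n−1} × (0, ∞) be open, and let u ∈ C²(V) be such that the tangential Hessian D²_{x′}u(x) is positive definite for every x ∈ V and the partial Legendre map P(x) = (∇_{x′}u(x), x_n) is a homeomorphism from V onto an open set W (hence, by the inverse function theorem, a C¹ diffeomorphism). Define the partial Legendre transform u*(y) = x′·∇_{x′}u(x) − u(x), where x = P^{−1}(y). Then u* is C¹ on W, twice differentiable, and for every y ∈ W, writing x = P^{−1}(y): ∇_{y′}u*(y) = x′; ∂u*/∂y_n(y) = −∂u/∂x_n(x); D²_{y′}u*(y) = (D²_{x′}u(x))^{−1}; and −(∂²u*/∂y_n²)(y) / det D²_{y′}u*(y) = det D²u(x). In particular, if det D²u(x) = x_n^n (∂u/∂x_n(x))^{n+2} in V, then u* satisfies y_n^n (−∂u*/∂y_n)^{n+2} det D²_{y′}u* + ∂²u*/∂y_n² = 0 in W. -/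
open Metric Set

noncomputable section

/-!
Differentiating `P ∘ P⁻¹ = id`, the Jacobian of `P⁻¹` at `y = P x` is `J⁻¹`, where `J` is `D²u(x)`
with its last row replaced by `eₙ`; `J` is invertible because `det J = det D²_{x′}u(x) > 0`.
Differentiating the formula for `u*` and using `∇_{x′}u(x) = y′` gives `∇u*(y) = (x′, -∂ₙu(x))`,
so the Hessian of `u*` is read off from `J⁻¹`: its tangential block is the transpose of that of
`J⁻¹`, i.e. `(D²_{x′}u)⁻¹`, and `-∂ₙₙu* = (D²u · J⁻¹)ₙₙ`. Since `J · J⁻¹ = 1` and `D²u` differs from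
`J` only in its last row, `D²u · J⁻¹` is the identity except for its last row, so its determinant
`det D²u / det D²_{x′}u` is that entry.
-/

open Matrix Filter Topology

lemma EuclideanSpace.clm_apply_eq_sum {ι 𝕜 F : Type*} [Fintype ι] [DecidableEq ι] [RCLike 𝕜]
    [NormedAddCommGroup F] [NormedSpace 𝕜 F] (L : EuclideanSpace 𝕜 ι →L[𝕜] F)
    (v : EuclideanSpace 𝕜 ι) :
    L v = ∑ i, v i • L (EuclideanSpace.single i 1) := by
  conv_lhs => rw [← (EuclideanSpace.basisFun ι 𝕜).toBasis.sum_repr v]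
  simp

lemma Matrix.toEuclideanCLM_single_apply {ι 𝕜 : Type*} [Fintype ι] [DecidableEq ι] [RCLike 𝕜]
    (M : Matrix ι ι 𝕜) (i j : ι) :
    toEuclideanCLM (𝕜 := 𝕜) M (EuclideanSpace.single j 1) i = M i j := by
  simp [EuclideanSpace.single, mulVec_single]

lemma Matrix.det_mul_eq_apply_of_updateRow_single_mul_eq_one {ι R : Type*} [Fintype ι]
    [DecidableEq ι] [CommRing R] {A N : Matrix ι ι R} {ν : ι}
    (h : A.updateRow ν (Pi.single ν 1) * N = 1) : (A * N).det = (A * N) ν ν := by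
  have hAN : A * N = (1 : Matrix ι ι R).updateRow ν ((A * N) ν) := by
    rw [← h, updateRow_mul, updateRow_idem, updateRow_eq_self]
  rw [hAN, ← cramer_transpose_apply, transpose_one, cramer_one]
  simp

lemma continuousOn_fderiv_of_differentiableAt_apply_single {ι 𝕜 F : Type*} [Fintype ι]
    [DecidableEq ι] [RCLike 𝕜] [NormedAddCommGroup F] [NormedSpace 𝕜 F]
    {f : EuclideanSpace 𝕜 ι → F} {s : Set (EuclideanSpace 𝕜 ι)}
    (h : ∀ x ∈ s, ∀ j, DifferentiableAt 𝕜 (fun y => fderiv 𝕜 f y (EuclideanSpace.single j 1)) x) :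
    ContinuousOn (fderiv 𝕜 f) s := by
  refine continuousOn_clm_apply.mpr fun v => ?_
  simp_rw [EuclideanSpace.clm_apply_eq_sum _ v]
  exact continuousOn_finsetSum _ fun j _ =>
    continuousOn_const.smul fun x hx => (h x hx j).continuousAt.continuousWithinAt

lemma HasFDerivAt.of_local_left_inverse_toEuclideanCLM {ι : Type*} [Fintype ι] [DecidableEq ι]
    {f g : EuclideanSpace ℝ ι → EuclideanSpace ℝ ι} {M : Matrix ι ι ℝ} {a : EuclideanSpace ℝ ι}
    (hM : IsUnit M.det) (hg : ContinuousAt g a)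
    (hf : HasFDerivAt f (toEuclideanCLM (𝕜 := ℝ) M) (g a)) (hfg : ∀ᶠ y in 𝓝 a, f (g y) = y) :
    HasFDerivAt g (toEuclideanCLM (𝕜 := ℝ) M⁻¹) a := by
  have hinv : ∀ A B : Matrix ι ι ℝ, A * B = 1 → ∀ v,
      toEuclideanCLM (𝕜 := ℝ) A (toEuclideanCLM (𝕜 := ℝ) B v) = v := fun A B h v => by
    rw [← mul_apply_eq_comp, ← map_mul, h, map_one, one_apply_eq_self]
  exact HasFDerivAt.of_local_left_inverse (f' := ContinuousLinearEquiv.equivOfInverse _ _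
    (hinv _ _ (nonsing_inv_mul M hM)) (hinv _ _ (mul_nonsing_inv M hM))) hg hf hfg

namespace PartialLegendre

variable {n : ℕ} (hn : 2 ≤ n)

lemma lastIdx_not_lt : ¬ ((lastIdx n hn : ℕ) < n - 1) := by simp [lastIdx]

lemma castLE_ne_lastIdx (i : Fin (n - 1)) : Fin.castLE (Nat.sub_le n 1) i ≠ lastIdx n hn :=
  fun h => lastIdx_not_lt hn (h ▸ i.2)

lemma lt_or_eq_lastIdx (i : Fin n) : (i : ℕ) < n - 1 ∨ i = lastIdx n hn := by
  rcases Nat.lt_or_ge i (n - 1) with h | h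
  · exact Or.inl h
  · exact Or.inr (Fin.ext (by simp [lastIdx]; omega))

def splitLast : Fin (n - 1) ⊕ Fin 1 ≃ Fin n :=
  finSumFinEquiv.trans (finCongr (by omega))

@[simp] lemma splitLast_inl (i : Fin (n - 1)) :
    splitLast hn (Sum.inl i) = Fin.castLE (Nat.sub_le n 1) i :=
  Fin.ext (by simp [splitLast])

@[simp] lemma splitLast_inr (i : Fin 1) : splitLast hn (Sum.inr i) = lastIdx n hn :=
  Fin.ext (by simp [splitLast, lastIdx, Fin.eq_zero i])

lemma sum_eq_sum_castLE_add_lastIdx {M : Type*} [AddCommMonoid M] (f : Fin n → M) :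
    ∑ i, f i = ∑ i : Fin (n - 1), f (Fin.castLE (Nat.sub_le n 1) i) + f (lastIdx n hn) := by
  rw [← (splitLast hn).sum_comp, Fintype.sum_sum_type]
  simp

section Jacobian

variable {R : Type*}

abbrev tangentialBlock (A : Matrix (Fin n) (Fin n) R) : Matrix (Fin (n - 1)) (Fin (n - 1)) R :=
  A.submatrix (Fin.castLE (Nat.sub_le n 1)) (Fin.castLE (Nat.sub_le n 1))

/-- The Jacobian matrix of the partial Legendre map `x ↦ (∇_{x′}u(x), xₙ)` when `D²u(x) = H`. -/
def legendreJacobian [Zero R] [One R] (H : Matrix (Fin n) (Fin n) R) : Matrix (Fin n) (Fin n) R :=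
  H.updateRow (lastIdx n hn) (Pi.single (lastIdx n hn) 1)

lemma tangentialBlock_eq_toBlocks₁₁ (A : Matrix (Fin n) (Fin n) R) :
    tangentialBlock A = (reindex (splitLast hn).symm (splitLast hn).symm A).toBlocks₁₁ := by
  ext i j
  simp [toBlocks₁₁]

lemma reindex_legendreJacobian [CommRing R] (H : Matrix (Fin n) (Fin n) R) :
    reindex (splitLast hn).symm (splitLast hn).symm (legendreJacobian hn H) =
      fromBlocks (tangentialBlock H)
        (of fun i (_ : Fin 1) => H (Fin.castLE (Nat.sub_le n 1) i) (lastIdx n hn)) 0 1 := by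
  ext (i | i) (j | j) <;>
    simp [legendreJacobian, updateRow_apply, castLE_ne_lastIdx, one_apply, Fin.eq_zero]

lemma det_legendreJacobian [CommRing R] (H : Matrix (Fin n) (Fin n) R) :
    (legendreJacobian hn H).det = (tangentialBlock H).det := by
  rw [← det_reindex_self (splitLast hn).symm, reindex_legendreJacobian, det_fromBlocks_zero₂₁,
    det_one, mul_one]

lemma isUnit_det_legendreJacobian [CommRing R] {H : Matrix (Fin n) (Fin n) R}
    (hH : IsUnit (tangentialBlock H)) : IsUnit (legendreJacobian hn H).det := by
  rwa [det_legendreJacobian, ← isUnit_iff_isUnit_det]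

lemma tangentialBlock_inv_legendreJacobian [Field R] {H : Matrix (Fin n) (Fin n) R}
    (hH : IsUnit (tangentialBlock H)) :
    tangentialBlock (legendreJacobian hn H)⁻¹ = (tangentialBlock H)⁻¹ := by
  rw [tangentialBlock_eq_toBlocks₁₁ hn, ← inv_reindex, reindex_legendreJacobian,
    inv_fromBlocks_zero₂₁_of_isUnit_iff _ _ _ (iff_of_true hH isUnit_one), toBlocks_fromBlocks₁₁]

lemma tangentialBlock_eq_inv [Field R] {H G : Matrix (Fin n) (Fin n) R}
    (hH : H.IsSymm) (hunit : IsUnit (tangentialBlock H))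
    (hG : ∀ i j : Fin (n - 1), G (Fin.castLE (Nat.sub_le n 1) i) (Fin.castLE (Nat.sub_le n 1) j) =
      (legendreJacobian hn H)⁻¹ (Fin.castLE (Nat.sub_le n 1) j) (Fin.castLE (Nat.sub_le n 1) i)) :
    tangentialBlock G = (tangentialBlock H)⁻¹ := by
  have hGt : tangentialBlock G = (tangentialBlock (legendreJacobian hn H)⁻¹)ᵀ := by
    ext i j
    exact hG i j
  rw [hGt, tangentialBlock_inv_legendreJacobian hn hunit, transpose_nonsing_inv,
    (hH.submatrix _).eq]

lemma neg_apply_lastIdx_eq_det_mul_det [Field R] {H G : Matrix (Fin n) (Fin n) R}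
    (hH : H.IsSymm) (hunit : IsUnit (tangentialBlock H))
    (hG : ∀ i, G i (lastIdx n hn) = -∑ k, (legendreJacobian hn H)⁻¹ k i * H k (lastIdx n hn)) :
    -G (lastIdx n hn) (lastIdx n hn) = H.det * (tangentialBlock H)⁻¹.det := by
  rw [det_nonsing_inv, ← det_legendreJacobian hn H, ← det_nonsing_inv, hG, neg_neg, ← det_mul,
    det_mul_eq_apply_of_updateRow_single_mul_eq_one (N := (legendreJacobian hn H)⁻¹)
      (mul_nonsing_inv _ (isUnit_det_legendreJacobian hn hunit)), mul_apply]
  exact Finset.sum_congr rfl fun k _ => by rw [hH.apply]; ring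

lemma posDef_tangentialBlock {H : Matrix (Fin n) (Fin n) ℝ} (hH : H.IsSymm)
    (hpos : ∀ ξ : EuclideanSpace ℝ (Fin n), ξ (lastIdx n hn) = 0 → ξ ≠ 0 →
      0 < ∑ i, ∑ j, H i j * ξ i * ξ j) :
    (tangentialBlock H).PosDef := by
  refine PosDef.of_dotProduct_mulVec_pos (isHermitian_iff_isSymm.mpr (hH.submatrix _))
    fun x hx => ?_
  set ξ : EuclideanSpace ℝ (Fin n) := WithLp.toLp 2 (Function.extend (Fin.castLE _) x 0)
  have hξ : ∀ i, ξ (Fin.castLE (Nat.sub_le n 1) i) = x i :=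
    (Fin.castLE_injective _).extend_apply x 0
  have hξν : ξ (lastIdx n hn) = 0 :=
    Function.extend_apply' _ _ _ fun ⟨i, hi⟩ => castLE_ne_lastIdx hn i hi
  have hξ0 : ξ ≠ 0 := fun h0 => hx (funext fun i => by simpa [h0] using (hξ i).symm)
  refine (hpos ξ hξν hξ0).trans_eq ?_
  simp only [sum_eq_sum_castLE_add_lastIdx hn, hξ, hξν, dotProduct, mulVec, Finset.mul_sum,
    submatrix_apply, star_trivial, mul_zero, zero_mul, add_zero, Finset.sum_const_zero]
  exact Finset.sum_congr rfl fun i _ => Finset.sum_congr rfl fun j _ => by ring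

end Jacobian

section Hessian

variable {u : EuclideanSpace ℝ (Fin n) → ℝ} {x : EuclideanSpace ℝ (Fin n)}

lemma hess_eq_fderiv_fderiv (hu : DifferentiableAt ℝ (fderiv ℝ u) x) (i j : Fin n) :
    Hess n u x i j =
      fderiv ℝ (fderiv ℝ u) x (EuclideanSpace.single i 1) (EuclideanSpace.single j 1) := by
  simp [Hess, fderiv_clm_apply hu (differentiableAt_const _)]

lemma differentiableAt_fderiv_of_contDiffAt_two (hu : ContDiffAt ℝ 2 u x) :
    DifferentiableAt ℝ (fderiv ℝ u) x :=
  (hu.fderiv_right (m := 1) le_rfl).differentiableAt one_ne_zero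

lemma isSymm_hess (hu : ContDiffAt ℝ 2 u x) : (Hess n u x).IsSymm :=
  IsSymm.ext fun i j => by
    have hd := differentiableAt_fderiv_of_contDiffAt_two hu
    rw [hess_eq_fderiv_fderiv hd, hess_eq_fderiv_fderiv hd, hu.isSymmSndFDerivAt (by simp)]

end Hessian

variable {u : EuclideanSpace ℝ (Fin n) → ℝ}
  {P Pinv : EuclideanSpace ℝ (Fin n) → EuclideanSpace ℝ (Fin n)}
  {ustar : EuclideanSpace ℝ (Fin n) → ℝ}

/-- `∇u*(z) = (x′, -∂ₙu(x))` with `x = P⁻¹(z)`. -/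
def legendreGradient (u : EuclideanSpace ℝ (Fin n) → ℝ)
    (Pinv : EuclideanSpace ℝ (Fin n) → EuclideanSpace ℝ (Fin n)) (z : EuclideanSpace ℝ (Fin n))
    (j : Fin n) : ℝ :=
  if (j : ℕ) < n - 1 then Pinv z j
  else -fderiv ℝ u (Pinv z) (EuclideanSpace.single (lastIdx n hn) 1)

section LegendreMap

variable (hP : ∀ x, P x = (EuclideanSpace.equiv (Fin n) ℝ).symm
  (fun i => if (i : ℕ) < n - 1 then fderiv ℝ u x (EuclideanSpace.single i 1) else xLast n hn x))
include hP

lemma legendreMap_apply_of_lt (x : EuclideanSpace ℝ (Fin n)) {i : Fin n} (hi : (i : ℕ) < n - 1) :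
    P x i = fderiv ℝ u x (EuclideanSpace.single i 1) := by
  simp [hP, hi]

lemma legendreMap_apply_lastIdx (x : EuclideanSpace ℝ (Fin n)) :
    P x (lastIdx n hn) = x (lastIdx n hn) := by
  simp [hP, lastIdx_not_lt, xLast]

lemma hasFDerivAt_legendreMap {x : EuclideanSpace ℝ (Fin n)}
    (hu : DifferentiableAt ℝ (fderiv ℝ u) x) (hs : IsSymmSndFDerivAt ℝ u x) :
    HasFDerivAt P (toEuclideanCLM (𝕜 := ℝ) (legendreJacobian hn (Hess n u x))) x := by
  rw [← hasFDerivWithinAt_univ, hasFDerivWithinAt_piLp]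
  intro i
  rw [hasFDerivWithinAt_univ]
  rcases lt_or_eq_lastIdx hn i with hi | rfl
  · refine ((hu.hasFDerivAt.clm_apply (hasFDerivAt_const (EuclideanSpace.single i 1) x)
      ).congr_of_eventuallyEq (.of_forall fun z => legendreMap_apply_of_lt hn hP z hi)
      ).congr_fderiv ?_
    ext v
    have hne : i ≠ lastIdx n hn := fun h => lastIdx_not_lt hn (h ▸ hi)
    simp [legendreJacobian, updateRow_apply, hne, mulVec, dotProduct, hess_eq_fderiv_fderiv hu]
    rw [hs, EuclideanSpace.clm_apply_eq_sum (fderiv ℝ (fderiv ℝ u) x _) v]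
    simp [mul_comm]
  · refine ((EuclideanSpace.proj (lastIdx n hn)).hasFDerivAt.congr_of_eventuallyEq
      (.of_forall fun z => legendreMap_apply_lastIdx hn hP z)).congr_fderiv ?_
    ext v
    simp [legendreJacobian, mulVec]

lemma hasFDerivAt_inverse_legendreMap {y : EuclideanSpace ℝ (Fin n)}
    (hu : ContDiffAt ℝ 2 u (Pinv y)) (hunit : IsUnit (tangentialBlock (Hess n u (Pinv y))))
    (hcont : ContinuousAt Pinv y) (hPP : ∀ᶠ z in 𝓝 y, P (Pinv z) = z) :
    HasFDerivAt Pinv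
      (toEuclideanCLM (𝕜 := ℝ) (legendreJacobian hn (Hess n u (Pinv y)))⁻¹) y :=
  .of_local_left_inverse_toEuclideanCLM (isUnit_det_legendreJacobian hn hunit) hcont
    (hasFDerivAt_legendreMap hn hP (differentiableAt_fderiv_of_contDiffAt_two hu)
      (hu.isSymmSndFDerivAt (by simp))) hPP

section Transform

variable (hustar : ∀ y, ustar y =
    (∑ i : Fin n, if (i : ℕ) < n - 1
      then Pinv y i * fderiv ℝ u (Pinv y) (EuclideanSpace.single i 1) else 0)
    - u (Pinv y))
  {y : EuclideanSpace ℝ (Fin n)} {L : EuclideanSpace ℝ (Fin n) →L[ℝ] EuclideanSpace ℝ (Fin n)}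
  (hPinv : HasFDerivAt Pinv L y) (hu : DifferentiableAt ℝ u (Pinv y))
  (hPP : ∀ᶠ z in 𝓝 y, P (Pinv z) = z)
include hustar hPinv hu hPP

lemma hasFDerivAt_legendreTransform :
    HasFDerivAt ustar
      (∑ j, legendreGradient hn u Pinv y j • EuclideanSpace.proj (𝕜 := ℝ) j) y := by
  have hgrad : ∀ z, P (Pinv z) = z → ∀ i : Fin (n - 1),
      fderiv ℝ u (Pinv z) (EuclideanSpace.single (Fin.castLE (Nat.sub_le n 1) i) 1) =
        z (Fin.castLE (Nat.sub_le n 1) i) := fun z hz i => by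
    rw [← legendreMap_apply_of_lt hn hP _ i.2, hz]
  have hlast :
      (EuclideanSpace.proj (lastIdx n hn)).comp L = EuclideanSpace.proj (lastIdx n hn) := by
    refine ((EuclideanSpace.proj (lastIdx n hn)).hasFDerivAt.comp y hPinv).unique
      ((EuclideanSpace.proj (lastIdx n hn)).hasFDerivAt.congr_of_eventuallyEq
        (hPP.mono fun z hz => ?_))
    simpa [hz] using (legendreMap_apply_lastIdx hn hP (Pinv z)).symm
  have hev : (fun z => ∑ i : Fin (n - 1), Pinv z (Fin.castLE (Nat.sub_le n 1) i) *
      z (Fin.castLE (Nat.sub_le n 1) i) - u (Pinv z)) =ᶠ[𝓝 y] ustar := by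
    filter_upwards [hPP] with z hz
    simp [hustar, sum_eq_sum_castLE_add_lastIdx hn, lastIdx_not_lt, hgrad z hz]
  refine (((HasFDerivAt.fun_sum (u := Finset.univ) fun i _ =>
    ((EuclideanSpace.proj (Fin.castLE (Nat.sub_le n 1) i)).hasFDerivAt.comp y hPinv).fun_mul
      (EuclideanSpace.proj (Fin.castLE (Nat.sub_le n 1) i)).hasFDerivAt).fun_sub
        (hu.hasFDerivAt.comp y hPinv)).congr_of_eventuallyEq hev.symm).congr_fderiv ?_
  ext v
  have hv : L v (lastIdx n hn) = v (lastIdx n hn) := by simpa using congrArg (· v) hlast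
  simp only [_root_.sub_apply, _root_.sum_apply, _root_.add_apply, _root_.smul_apply,
    ContinuousLinearMap.comp_apply, EuclideanSpace.clm_apply_eq_sum (fderiv ℝ u (Pinv y)) (L v)]
  -- the two terms `y′ · (L v)′`, from `x′ · y′` and from `u ∘ P⁻¹`, cancel
  simp [legendreGradient, sum_eq_sum_castLE_add_lastIdx hn, lastIdx_not_lt,
    hgrad y hPP.self_of_nhds, hv, Finset.sum_add_distrib, mul_comm]
  ring

lemma fderiv_legendreTransform_apply_single (j : Fin n) :
    fderiv ℝ ustar y (EuclideanSpace.single j 1) = legendreGradient hn u Pinv y j := by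
  rw [(hasFDerivAt_legendreTransform hn hP hustar hPinv hu hPP).fderiv, _root_.sum_apply,
    Finset.sum_eq_single j (fun k _ hk => by simp [hk]) (by simp)]
  simp

end Transform

end LegendreMap

section SecondDerivatives

variable {y : EuclideanSpace ℝ (Fin n)}
  (hpartial : ∀ᶠ z in 𝓝 y, ∀ j, fderiv ℝ ustar z (EuclideanSpace.single j 1) =
    legendreGradient hn u Pinv z j)
include hpartial

lemma hasFDerivAt_fderiv_apply_single_legendreTransform
    {L : EuclideanSpace ℝ (Fin n) →L[ℝ] EuclideanSpace ℝ (Fin n)} (hPinv : HasFDerivAt Pinv L y)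
    (hu : DifferentiableAt ℝ (fderiv ℝ u) (Pinv y)) (j : Fin n) :
    HasFDerivAt (fun z => fderiv ℝ ustar z (EuclideanSpace.single j 1))
      (if (j : ℕ) < n - 1 then (EuclideanSpace.proj j).comp L
      else -((ContinuousLinearMap.apply ℝ ℝ (EuclideanSpace.single (lastIdx n hn) 1)).comp
        (fderiv ℝ (fderiv ℝ u) (Pinv y))).comp L) y := by
  split_ifs with hj
  · exact ((EuclideanSpace.proj (𝕜 := ℝ) j).hasFDerivAt.comp y hPinv).congr_of_eventuallyEq
      (hpartial.mono fun z hz => (hz j).trans (if_pos hj))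
  · exact (((ContinuousLinearMap.apply ℝ ℝ (EuclideanSpace.single (lastIdx n hn) (1 : ℝ))
      ).hasFDerivAt.comp _ hu.hasFDerivAt).comp y hPinv).neg.congr_of_eventuallyEq
        (hpartial.mono fun z hz => (hz j).trans (if_neg hj))

lemma hess_legendreTransform {N : Matrix (Fin n) (Fin n) ℝ}
    (hPinv : HasFDerivAt Pinv (toEuclideanCLM (𝕜 := ℝ) N) y)
    (hu : DifferentiableAt ℝ (fderiv ℝ u) (Pinv y)) (i j : Fin n) :
    Hess n ustar y i j = if (j : ℕ) < n - 1 then N j i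
      else -∑ k, N k i * Hess n u (Pinv y) k (lastIdx n hn) := by
  rw [Hess, of_apply,
    (hasFDerivAt_fderiv_apply_single_legendreTransform hn hpartial hPinv hu j).fderiv]
  split_ifs
  · simp [toEuclideanCLM_single_apply]
  · simp [EuclideanSpace.clm_apply_eq_sum (fderiv ℝ (fderiv ℝ u) (Pinv y))
      (toEuclideanCLM (𝕜 := ℝ) N (EuclideanSpace.single i 1)), hess_eq_fderiv_fderiv hu,
      toEuclideanCLM_single_apply]

variable (hPinv : HasFDerivAt Pinv
    (toEuclideanCLM (𝕜 := ℝ) (legendreJacobian hn (Hess n u (Pinv y)))⁻¹) y)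
  (hu : ContDiffAt ℝ 2 u (Pinv y)) (hunit : IsUnit (tangentialBlock (Hess n u (Pinv y))))
include hPinv hu hunit

lemma tangentialBlock_hess_legendreTransform :
    tangentialBlock (Hess n ustar y) = (tangentialBlock (Hess n u (Pinv y)))⁻¹ :=
  tangentialBlock_eq_inv hn (isSymm_hess hu) hunit fun i j => by
    rw [hess_legendreTransform hn hpartial hPinv (differentiableAt_fderiv_of_contDiffAt_two hu),
      if_pos (show ((Fin.castLE (Nat.sub_le n 1) j : Fin n) : ℕ) < n - 1 from j.2)]

lemma neg_hess_legendreTransform_lastIdx :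
    -Hess n ustar y (lastIdx n hn) (lastIdx n hn) =
      (Hess n u (Pinv y)).det * (tangentialBlock (Hess n u (Pinv y)))⁻¹.det :=
  neg_apply_lastIdx_eq_det_mul_det hn (isSymm_hess hu) hunit fun i => by
    rw [hess_legendreTransform hn hpartial hPinv (differentiableAt_fderiv_of_contDiffAt_two hu),
      if_neg (lastIdx_not_lt hn)]

end SecondDerivatives

end PartialLegendre

theorem partial_legendre_transform_general
    (n : ℕ) (hn : 2 ≤ n)
    (V W : Set (EuclideanSpace ℝ (Fin n)))
    (hV : IsOpen V) (hW : IsOpen W)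
    (u : EuclideanSpace ℝ (Fin n) → ℝ)
    (hu : ContDiffOn ℝ 2 u V)
    (hposdef : ∀ x ∈ V, ∀ ξ : EuclideanSpace ℝ (Fin n), ξ (lastIdx n hn) = 0 → ξ ≠ 0 →
      0 < ∑ i, ∑ j, Hess n u x i j * ξ i * ξ j)
    -- the partial Legendre map `P(x) = (∇_{x′}u(x), x_n)` and its inverse
    (P Pinv : EuclideanSpace ℝ (Fin n) → EuclideanSpace ℝ (Fin n))
    (hP : ∀ x, P x = (EuclideanSpace.equiv (Fin n) ℝ).symm
      (fun i => if (i : ℕ) < n - 1 then fderiv ℝ u x (EuclideanSpace.single i 1)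
        else xLast n hn x))
    (hbij : Set.BijOn P V W)
    (hinv : Set.InvOn Pinv P V W)
    (hPinv_cont : ContinuousOn Pinv W)
    -- the partial Legendre transform `u*`
    (ustar : EuclideanSpace ℝ (Fin n) → ℝ)
    (hustar : ∀ y, ustar y =
      (∑ i : Fin n, if (i : ℕ) < n - 1
        then Pinv y i * fderiv ℝ u (Pinv y) (EuclideanSpace.single i 1) else 0)
      - u (Pinv y)) :
    -- `u*` is `C¹` on `W` and twice differentiable there
    (∀ y ∈ W, TwiceDiffAt n ustar y) ∧
    ContinuousOn (fderiv ℝ ustar) W ∧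
    (∀ y ∈ W,
      -- tangential gradient: `∇_{y′}u*(y) = x′`
      (∀ i : Fin n, (i : ℕ) < n - 1 →
        fderiv ℝ ustar y (EuclideanSpace.single i 1) = Pinv y i) ∧
      -- normal derivative: `u*_n(y) = −u_n(x)`
      fderiv ℝ ustar y (EuclideanSpace.single (lastIdx n hn) 1)
        = - fderiv ℝ u (Pinv y) (EuclideanSpace.single (lastIdx n hn) 1) ∧
      -- `D²_{y′}u*(y) = (D²_{x′}u(x))⁻¹` and `−u*_{nn}/det D²_{y′}u* = det D²u`
      (∀ Mx My : Matrix (Fin (n - 1)) (Fin (n - 1)) ℝ,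
        Mx = Matrix.of (fun i j => Hess n u (Pinv y)
          (Fin.castLE (Nat.sub_le n 1) i) (Fin.castLE (Nat.sub_le n 1) j)) →
        My = Matrix.of (fun i j => Hess n ustar y
          (Fin.castLE (Nat.sub_le n 1) i) (Fin.castLE (Nat.sub_le n 1) j)) →
        My * Mx = 1 ∧ Mx * My = 1 ∧
        - Hess n ustar y (lastIdx n hn) (lastIdx n hn)
          = (Hess n u (Pinv y)).det * My.det)) ∧
    -- in particular: the transformed eigenvalue-type equation
    ((∀ x ∈ V, (Hess n u x).det
        = (xLast n hn x) ^ n * (fderiv ℝ u x (EuclideanSpace.single (lastIdx n hn) 1)) ^ (n + 2)) →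
      ∀ y ∈ W,
        (xLast n hn y) ^ n *
            (- fderiv ℝ ustar y (EuclideanSpace.single (lastIdx n hn) 1)) ^ (n + 2) *
            (Matrix.of (fun i j : Fin (n - 1) => Hess n ustar y
              (Fin.castLE (Nat.sub_le n 1) i) (Fin.castLE (Nat.sub_le n 1) j))).det +
          Hess n ustar y (lastIdx n hn) (lastIdx n hn) = 0) := by
  open PartialLegendre in
  have hmaps : MapsTo Pinv W V := hinv.1.mapsTo hbij.surjOn
  have hC2 : ∀ y ∈ W, ContDiffAt ℝ 2 u (Pinv y) := fun y hy =>
    hu.contDiffAt (hV.mem_nhds (hmaps hy))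
  have hunit : ∀ y ∈ W, IsUnit (tangentialBlock (Hess n u (Pinv y))) := fun y hy =>
    (posDef_tangentialBlock hn (isSymm_hess (hC2 y hy)) (hposdef _ (hmaps hy))).isUnit
  have hPP : ∀ y ∈ W, ∀ᶠ z in 𝓝 y, P (Pinv z) = z := fun y hy =>
    (hW.eventually_mem hy).mono fun z hz => hinv.2 hz
  have hDPinv := fun y (hy : y ∈ W) => hasFDerivAt_inverse_legendreMap hn hP (hC2 y hy)
    (hunit y hy) (hPinv_cont.continuousAt (hW.mem_nhds hy)) (hPP y hy)
  have hDustar := fun y (hy : y ∈ W) => hasFDerivAt_legendreTransform hn hP hustar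
    (hDPinv y hy) ((hC2 y hy).differentiableAt two_ne_zero) (hPP y hy)
  have hpartial : ∀ y ∈ W, ∀ᶠ z in 𝓝 y, ∀ j, fderiv ℝ ustar z (EuclideanSpace.single j 1) =
      legendreGradient hn u Pinv z j := fun y hy => (hW.eventually_mem hy).mono fun z hz =>
    fderiv_legendreTransform_apply_single hn hP hustar (hDPinv z hz)
      ((hC2 z hz).differentiableAt two_ne_zero) (hPP z hz)
  have hsecond : ∀ y ∈ W, ∀ j : Fin n,
      DifferentiableAt ℝ (fun z => fderiv ℝ ustar z (EuclideanSpace.single j 1)) y := fun y hy j =>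
    (hasFDerivAt_fderiv_apply_single_legendreTransform hn (hpartial y hy) (hDPinv y hy)
      (differentiableAt_fderiv_of_contDiffAt_two (hC2 y hy)) j).differentiableAt
  have hblock := fun y (hy : y ∈ W) => tangentialBlock_hess_legendreTransform hn
    (hpartial y hy) (hDPinv y hy) (hC2 y hy) (hunit y hy)
  have hlast := fun y (hy : y ∈ W) => neg_hess_legendreTransform_lastIdx hn
    (hpartial y hy) (hDPinv y hy) (hC2 y hy) (hunit y hy)
  have hgrad := fun y (hy : y ∈ W) (j : Fin n) => (hpartial y hy).self_of_nhds j
  refine ⟨fun y hy => ⟨(hDustar y hy).differentiableAt, hsecond y hy⟩,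
    continuousOn_fderiv_of_differentiableAt_apply_single hsecond, fun y hy =>
      ⟨fun i hi => by rw [hgrad y hy, legendreGradient, if_pos hi],
        by rw [hgrad y hy, legendreGradient, if_neg (lastIdx_not_lt hn)],
        fun Mx My hMx hMy => ?_⟩, fun hdet y hy => ?_⟩
  · have hMy : My = Mx⁻¹ := hMx ▸ hMy ▸ hblock y hy
    have hdet : IsUnit Mx.det := (isUnit_iff_isUnit_det _).mp (hMx ▸ hunit y hy)
    exact ⟨hMy ▸ nonsing_inv_mul _ hdet, hMy ▸ mul_nonsing_inv _ hdet, hMy ▸ hMx ▸ hlast y hy⟩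
  · have hxy : xLast n hn (Pinv y) = xLast n hn y := by
      rw [xLast, ← legendreMap_apply_lastIdx hn hP, hinv.2 hy, xLast]
    have hnn := hlast y hy
    rw [← hblock y hy] at hnn
    rw [hgrad y hy, legendreGradient, if_neg (lastIdx_not_lt hn), neg_neg, ← hxy,
      ← hdet _ (hmaps hy)]
    change _ * (tangentialBlock (Hess n ustar y)).det + _ = 0
    linarith

/-- Section 5.2, properties of the partial Legendre transform. -/
theorem partial_legendre_transform
    (n : ℕ) (hn : 2 ≤ n)
    (V W : Set (EuclideanSpace ℝ (Fin n)))
    (hV : IsOpen V) (hVsub : V ⊆ {x | 0 < xLast n hn x}) (hW : IsOpen W)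
    (u : EuclideanSpace ℝ (Fin n) → ℝ)
    (hu : ContDiffOn ℝ 2 u V)
    (hposdef : ∀ x ∈ V, ∀ ξ : EuclideanSpace ℝ (Fin n), ξ (lastIdx n hn) = 0 → ξ ≠ 0 →
      0 < ∑ i, ∑ j, Hess n u x i j * ξ i * ξ j)
    -- the partial Legendre map `P(x) = (∇_{x′}u(x), x_n)` and its inverse
    (P Pinv : EuclideanSpace ℝ (Fin n) → EuclideanSpace ℝ (Fin n))
    (hP : ∀ x, P x = (EuclideanSpace.equiv (Fin n) ℝ).symm
      (fun i => if (i : ℕ) < n - 1 then fderiv ℝ u x (EuclideanSpace.single i 1)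
        else xLast n hn x))
    (hbij : Set.BijOn P V W)
    (hinv : Set.InvOn Pinv P V W)
    (hPinv_cont : ContinuousOn Pinv W)
    -- the partial Legendre transform `u*`
    (ustar : EuclideanSpace ℝ (Fin n) → ℝ)
    (hustar : ∀ y, ustar y =
      (∑ i : Fin n, if (i : ℕ) < n - 1
        then Pinv y i * fderiv ℝ u (Pinv y) (EuclideanSpace.single i 1) else 0)
      - u (Pinv y)) :
    -- `u*` is `C¹` on `W` and twice differentiable there
    (∀ y ∈ W, TwiceDiffAt n ustar y) ∧
    ContinuousOn (fderiv ℝ ustar) W ∧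
    (∀ y ∈ W,
      -- tangential gradient: `∇_{y′}u*(y) = x′`
      (∀ i : Fin n, (i : ℕ) < n - 1 →
        fderiv ℝ ustar y (EuclideanSpace.single i 1) = Pinv y i) ∧
      -- normal derivative: `u*_n(y) = −u_n(x)`
      fderiv ℝ ustar y (EuclideanSpace.single (lastIdx n hn) 1)
        = - fderiv ℝ u (Pinv y) (EuclideanSpace.single (lastIdx n hn) 1) ∧
      -- `D²_{y′}u*(y) = (D²_{x′}u(x))⁻¹` and `−u*_{nn}/det D²_{y′}u* = det D²u`
      (∀ Mx My : Matrix (Fin (n - 1)) (Fin (n - 1)) ℝ,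
        Mx = Matrix.of (fun i j => Hess n u (Pinv y)
          (Fin.castLE (Nat.sub_le n 1) i) (Fin.castLE (Nat.sub_le n 1) j)) →
        My = Matrix.of (fun i j => Hess n ustar y
          (Fin.castLE (Nat.sub_le n 1) i) (Fin.castLE (Nat.sub_le n 1) j)) →
        My * Mx = 1 ∧ Mx * My = 1 ∧
        - Hess n ustar y (lastIdx n hn) (lastIdx n hn)
          = (Hess n u (Pinv y)).det * My.det)) ∧
    -- in particular: the transformed eigenvalue-type equation
    ((∀ x ∈ V, (Hess n u x).det
        = (xLast n hn x) ^ n * (fderiv ℝ u x (EuclideanSpace.single (lastIdx n hn) 1)) ^ (n + 2)) →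
      ∀ y ∈ W,
        (xLast n hn y) ^ n *
            (- fderiv ℝ ustar y (EuclideanSpace.single (lastIdx n hn) 1)) ^ (n + 2) *
            (Matrix.of (fun i j : Fin (n - 1) => Hess n ustar y
              (Fin.castLE (Nat.sub_le n 1) i) (Fin.castLE (Nat.sub_le n 1) j))).det +
          Hess n ustar y (lastIdx n hn) (lastIdx n hn) = 0) :=
  partial_legendre_transform_general n hn V W hV hW u hu hposdef P Pinv hP hbij hinv hPinv_cont
    ustar hustar
end
end
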